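/- arXiv:1304.0719 — 2 statements merged into one kernel-verified Lean document; each statement's English description precedes it below -/
import Mathlib

section
/- In any Dallajascar (φ, H, r) on S, the relations ∫ and ⊐ are asymmetric and mutually exclusive: for all x, y : S, (a) if x ∫ y then not y ∫ x; (b) if x ⊐ y then not y ⊐ x; and (c) if x ∫ y then neither x ⊐ y nor y ⊐ x. -/
/-- A *Dallajascar* on a finite nonempty type `S`: a parent function `phi : S → Option S`,
an ordered-children function `H : S → List S`, and a root `r : S`, such that
(i) `phi r = none`; (ii) `phi x ≠ none` for `x ≠ r`; (iii) the transitive closure of the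
parent relation is irreflexive; (iv) `H x` is a duplicate-free list whose members are
exactly the `y` with `phi y = some x`. -/
structure Dallajascar (S : Type*) [Fintype S] [Nonempty S] where
  phi : S → Option S
  H : S → List S
  r : S
  phi_root : phi r = none
  phi_ne_none : ∀ x : S, x ≠ r → phi x ≠ none
  acyclic : ∀ x : S, ¬ Relation.TransGen (fun y z => phi y = some z) x x
  H_nodup : ∀ x : S, (H x).Nodup
  mem_H : ∀ x y : S, y ∈ H x ↔ phi y = some x

namespace Dallajascar

variable {S : Type*} [Fintype S] [Nonempty S]

/-- The parent relation: `P D y x` iff `x` is the parent of `y`. -/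
def P (D : Dallajascar S) (y x : S) : Prop := D.phi y = some x

/-- `Nest D x y` : « x emboîte y », i.e. `x` is a strict ancestor of `y`. -/
def Nest (D : Dallajascar S) (x y : S) : Prop := Relation.TransGen D.P y x

/-- `Prec D x y` : « x précède y » : there are ancestors-or-selves `x'` of `x` and `y'`
of `y` with a common parent `a`, `x'` occurring strictly before `y'` in `H a`. -/
def Prec (D : Dallajascar S) (x y : S) : Prop :=
  ∃ a x' y' : S, Relation.ReflTransGen D.P x x' ∧ Relation.ReflTransGen D.P y y' ∧
    D.phi x' = some a ∧ D.phi y' = some a ∧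
    ∃ i j : ℕ, i < j ∧ (D.H a)[i]? = some x' ∧ (D.H a)[j]? = some y'

/-! Every node has at most one parent, so the ancestors of a node form a chain and two distinct
siblings never have a common descendant. A witness of `x ⊐ y` is a pair of distinct siblings
`x' ≠ y'` above `x` and `y`; if `x` and `y` are nested, both lie above the lower of the two,
which is impossible. For two opposite witnesses `(x', y')` and `(y'', x'')`, the ancestors
`x'` and `x''` of `x` are comparable: if they are equal then so are `y'` and `y''` and the two
positions in the list of children contradict each other, and otherwise one pair of siblings
lies above a common node. -/

theorem _root_.List.Nodup.eq_of_getElem?_eq_some {α : Type*} {l : List α} (hl : l.Nodup)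
    {i j : ℕ} {a : α} (hi : l[i]? = some a) (hj : l[j]? = some a) : i = j :=
  (List.getElem?_inj (List.getElem?_eq_some_iff.1 hi).1 hl).1 (hi.trans hj.symm)

theorem P_rightUnique (D : Dallajascar S) : Relator.RightUnique D.P :=
  fun _ _ _ h h' => Option.some.inj (h.symm.trans h')

theorem not_reflTransGen_of_P (D : Dallajascar S) {u a : S} (h : D.P u a) :
    ¬ Relation.ReflTransGen D.P a u :=
  fun h' => D.acyclic a (.tail' h' h)

theorem eq_or_reflTransGen_of_common_descendant (D : Dallajascar S) {z u v a b : S}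
    (hu : Relation.ReflTransGen D.P z u) (hv : Relation.ReflTransGen D.P z v)
    (ha : D.P u a) (hb : D.P v b) :
    u = v ∨ Relation.ReflTransGen D.P a v ∨ Relation.ReflTransGen D.P b u := by
  rcases hu.total_of_right_unique D.P_rightUnique hv with huv | hvu
  · rcases huv.cases_head with rfl | ⟨c, hc, hcv⟩
    · exact Or.inl rfl
    · exact Or.inr (Or.inl (D.P_rightUnique hc ha ▸ hcv))
  · rcases hvu.cases_head with rfl | ⟨c, hc, hcu⟩
    · exact Or.inl rfl
    · exact Or.inr (Or.inr (D.P_rightUnique hc hb ▸ hcu))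

theorem eq_of_common_descendant_of_P (D : Dallajascar S) {z u v a : S}
    (hu : Relation.ReflTransGen D.P z u) (hv : Relation.ReflTransGen D.P z v)
    (hua : D.P u a) (hva : D.P v a) : u = v := by
  rcases D.eq_or_reflTransGen_of_common_descendant hu hv hua hva with h | h | h
  · exact h
  · exact absurd h (D.not_reflTransGen_of_P hva)
  · exact absurd h (D.not_reflTransGen_of_P hua)

theorem ne_of_lt_of_H_getElem? (D : Dallajascar S) {a u v : S} {i j : ℕ} (hij : i < j)
    (hi : (D.H a)[i]? = some u) (hj : (D.H a)[j]? = some v) : u ≠ v := by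
  rintro rfl
  exact hij.ne ((D.H_nodup a).eq_of_getElem?_eq_some hi hj)

theorem not_prec_of_common_descendant (D : Dallajascar S) {x y z : S}
    (hx : Relation.ReflTransGen D.P z x) (hy : Relation.ReflTransGen D.P z y) : ¬ D.Prec x y := by
  rintro ⟨a, x', y', hxx', hyy', hxa, hya, i, j, hij, hi, hj⟩
  exact D.ne_of_lt_of_H_getElem? hij hi hj
    (D.eq_of_common_descendant_of_P (hx.trans hxx') (hy.trans hyy') hxa hya)

theorem nest_asymm (D : Dallajascar S) {x y : S} (h : D.Nest x y) : ¬ D.Nest y x :=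
  fun h' => D.acyclic x (h'.trans h)

theorem prec_asymm (D : Dallajascar S) {x y : S} (h : D.Prec x y) : ¬ D.Prec y x := by
  obtain ⟨a, x', y', hxx', hyy', hxa, hya, i, j, hij, hi, hj⟩ := h
  rintro ⟨b, y'', x'', hyy'', hxx'', hyb, hxb, k, l, hkl, hk, hl⟩
  rcases D.eq_or_reflTransGen_of_common_descendant hxx' hxx'' hxa hxb with rfl | hax'' | hbx'
  · obtain rfl : a = b := D.P_rightUnique hxa hxb
    obtain rfl : y' = y'' := D.eq_of_common_descendant_of_P hyy' hyy'' hya hyb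
    have hil := (D.H_nodup a).eq_of_getElem?_eq_some hi hl
    have hjk := (D.H_nodup a).eq_of_getElem?_eq_some hj hk
    omega
  · have hyx'' : Relation.ReflTransGen D.P y x'' := hyy'.trans (.head hya hax'')
    exact D.ne_of_lt_of_H_getElem? hkl hk hl (D.eq_of_common_descendant_of_P hyy'' hyx'' hyb hxb)
  · have hyx' : Relation.ReflTransGen D.P y x' := hyy''.trans (.head hyb hbx')
    exact D.ne_of_lt_of_H_getElem? hij hi hj (D.eq_of_common_descendant_of_P hyx' hyy' hxa hya)

/-- `∫` and `⊐` are asymmetric and mutually exclusive. -/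
theorem asymm_and_exclusive (D : Dallajascar S) :
    ∀ x y : S,
      (D.Nest x y → ¬ D.Nest y x) ∧
      (D.Prec x y → ¬ D.Prec y x) ∧
      (D.Nest x y → ¬ D.Prec x y ∧ ¬ D.Prec y x) := by
  intro x y
  refine ⟨D.nest_asymm, D.prec_asymm, fun h => ⟨?_, ?_⟩⟩
  · exact D.not_prec_of_common_descendant h.to_reflTransGen .refl
  · exact D.not_prec_of_common_descendant .refl h.to_reflTransGen

end Dallajascar
end

section
/- (Corollaire fondamental 3.3.6) The map sending a Dallajascar to its Jassological word induces a bijection between the set of equivalence classes of Dallajascars and the set of Simple Jassological words; precisely, on the sigma type Σ n : ℕ, Dallajascar (Fin (n+1)), the relation 'being equivalent' is an equivalence relation, the map D ↦ M(D) is constant on equivalence classes, and the induced map from the quotient to {M : List Bool | M is a Simple Jassological word} is a bijection. -/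
namespace Dallajascar

variable {S : Type*} [Fintype S] [Nonempty S]

/-- The parent relation is well-founded. -/
theorem wfP (D : Dallajascar S) : WellFounded D.P := by
  haveI : IsTrans S (Relation.TransGen D.P) := ⟨fun _ _ _ h₁ h₂ => h₁.trans h₂⟩
  haveI : IsIrrefl S (Relation.TransGen D.P) := ⟨D.acyclic⟩
  exact Subrelation.wf (r := Relation.TransGen D.P)
    (fun {x y} h => Relation.TransGen.single h)
    (Finite.wellFounded_of_trans_of_irrefl _)

/-- `W D x` : the word over `{true (open), false (close)}` associated with the subtree
rooted at `x`, defined by well-founded recursion: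
`W x = true :: (((H x).map W).flatten ++ [false])`. -/
noncomputable def W (D : Dallajascar S) : S → List Bool :=
  D.wfP.fix fun x ih =>
    true :: ((((D.H x).attach.map fun (y : {y : S // y ∈ D.H x}) =>
      ih y.1 ((D.mem_H x y.1).1 y.2)).flatten) ++ [false])

/-- `M(φ,H)` : the Jassological word of the Dallajascar. -/
noncomputable def MJword (D : Dallajascar S) : List Bool := D.W D.r

end Dallajascar

/-- A *Mot Jassologique Simple* : a nonempty word containing equally many opening
(`true`) and closing (`false`) characters, every nonempty proper prefix of which contains
strictly more opening than closing characters. -/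
def SimpleJasso (M : List Bool) : Prop :=
  M ≠ [] ∧ M.count true = M.count false ∧
    ∀ t : List Bool, t <+: M → t ≠ [] → t ≠ M → t.count false < t.count true

/-- The Jassological word of a Dallajascar on `Fin (n + 1)`, as a function on the sigma
type of all such Dallajascars. -/
noncomputable def MJsig (a : Σ n : ℕ, Dallajascar (Fin (n + 1))) : List Bool :=
  a.2.MJword

/-- Equivalence of Dallajascars: a bijection `f` with `K (f a) = (H a).map f`. -/
def EquivD (a b : Σ n : ℕ, Dallajascar (Fin (n + 1))) : Prop :=
  ∃ f : Fin (a.1 + 1) ≃ Fin (b.1 + 1), ∀ x, b.2.H (f x) = (a.2.H x).map f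

theorem List.IsPrefix.prefix_or_eq_append {α : Type*} {t l m : List α} (h : t <+: l ++ m) :
    t <+: l ∨ ∃ u, t = l ++ u ∧ u <+: m := by
  rcases List.prefix_or_prefix_of_prefix h (List.prefix_append l m) with h' | ⟨u, rfl⟩
  · exact Or.inl h'
  · exact Or.inr ⟨u, rfl, (List.prefix_append_right_inj l).1 h⟩

def IsDyck (l : List Bool) : Prop :=
  l.count true = l.count false ∧ ∀ t, t <+: l → t.count false ≤ t.count true

namespace IsDyck

theorem nil : IsDyck [] := ⟨rfl, fun t ht => by simp [List.prefix_nil.1 ht]⟩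

theorem append {l m : List Bool} (hl : IsDyck l) (hm : IsDyck m) : IsDyck (l ++ m) := by
  refine ⟨by simp only [List.count_append, hl.1, hm.1], fun t ht => ?_⟩
  rcases ht.prefix_or_eq_append with ht | ⟨u, rfl, hu⟩
  · exact hl.2 t ht
  · have := hl.1
    have := hm.2 u hu
    simp only [List.count_append]
    omega

theorem flatten {L : List (List Bool)} (h : ∀ w ∈ L, IsDyck w) : IsDyck L.flatten := by
  induction L with
  | nil => exact nil
  | cons w L ih =>
    rw [List.forall_mem_cons] at h
    exact h.1.append (ih h.2)

-- Split off the shortest nonempty balanced prefix.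
theorem exists_simpleJasso_append {l : List Bool} (hl : IsDyck l) (hne : l ≠ []) :
    ∃ w r, SimpleJasso w ∧ IsDyck r ∧ l = w ++ r := by
  classical
  have hex : ∃ k, 0 < k ∧ (l.take k).count true = (l.take k).count false :=
    ⟨l.length, List.length_pos_iff.2 hne, by rw [List.take_length]; exact hl.1⟩
  obtain ⟨hk0, hkbal⟩ := Nat.find_spec hex
  have hkl : Nat.find hex ≤ l.length :=
    Nat.find_min' hex ⟨List.length_pos_iff.2 hne, by rw [List.take_length]; exact hl.1⟩
  have hsplit := (List.take_append_drop (Nat.find hex) l).symm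
  refine ⟨_, _, ⟨?_, hkbal, fun t ht ht0 htk => ?_⟩, ⟨?_, fun t ht => ?_⟩, hsplit⟩
  · simp [List.take_eq_nil_iff, hne, hk0.ne']
  · have hlt : t.length < Nat.find hex := by
      refine lt_of_le_of_ne (List.prefix_take_iff.1 ht).2 fun h => htk (ht.eq_of_length ?_)
      simp [h, hkl]
    have hmin := Nat.find_min hex hlt
    rw [← List.prefix_iff_eq_take.1 (List.prefix_take_iff.1 ht).1] at hmin
    have := hl.2 t (List.prefix_take_iff.1 ht).1
    have := List.length_pos_iff.2 ht0
    omega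
  · have := hl.1
    rw [hsplit] at this
    simp only [List.count_append] at this
    omega
  · have hpre := (List.prefix_append_right_inj (l.take (Nat.find hex))).2 ht
    rw [← hsplit] at hpre
    have := hl.2 _ hpre
    simp only [List.count_append] at this
    omega

theorem exists_flatten_eq {l : List Bool} (hl : IsDyck l) :
    ∃ L : List (List Bool), (∀ w ∈ L, SimpleJasso w) ∧ L.flatten = l := by
  rcases eq_or_ne l [] with rfl | hne
  · exact ⟨[], by simp, rfl⟩
  obtain ⟨w, r, hw, hr, rfl⟩ := hl.exists_simpleJasso_append hne
  have : r.length < (w ++ r).length := by simp [List.length_pos_iff.2 hw.1]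
  obtain ⟨L, hL, rfl⟩ := hr.exists_flatten_eq
  exact ⟨w :: L, List.forall_mem_cons.2 ⟨hw, hL⟩, rfl⟩
termination_by l.length

end IsDyck

theorem simpleJasso_iff {M : List Bool} :
    SimpleJasso M ↔ ∃ I, IsDyck I ∧ M = true :: (I ++ [false]) := by
  constructor
  · rintro ⟨hne, hbal, hpre⟩
    obtain ⟨b, M, rfl⟩ := List.exists_cons_of_ne_nil hne
    obtain rfl | ⟨I, c, rfl⟩ := M.eq_nil_or_concat'
    · cases b <;> simp at hbal
    obtain rfl : b = true := by
      have := hpre [b] (List.cons_prefix_cons.2 ⟨rfl, List.nil_prefix⟩) (by simp) (by simp)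
      cases b <;> simp_all
    have hI : ∀ t, t <+: I → t.count false ≤ t.count true := fun t ht => by
      have hlt : t.length < (I ++ [c]).length := by simpa using Nat.lt_succ_of_le ht.length_le
      have := hpre (true :: t) (List.cons_prefix_cons.2 ⟨rfl, ht.trans (I.prefix_append _)⟩)
        (List.cons_ne_nil _ _) (fun h => by simp [List.cons.inj h |>.2] at hlt)
      simp only [ne_eq, Bool.true_eq_false, not_false_eq_true, List.count_cons_of_ne,
        List.count_cons_self] at this
      omega
    have := hI I List.prefix_rfl
    cases c <;> simp at hbal
    · exact ⟨I, ⟨by omega, hI⟩, rfl⟩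
    · omega
  · rintro ⟨I, ⟨hbal, hpre⟩, rfl⟩
    refine ⟨List.cons_ne_nil _ _, by simp [hbal], fun t ht hne hM => ?_⟩
    obtain rfl | ⟨t, rfl, ht'⟩ := List.prefix_cons_iff.1 ht
    · exact absurd rfl hne
    obtain rfl | ht'' := List.prefix_concat_iff.1 ht'
    · exact absurd rfl hM
    have := hpre t ht''
    simp only [ne_eq, Bool.true_eq_false, not_false_eq_true, List.count_cons_of_ne,
      List.count_cons_self]
    omega

namespace SimpleJasso

theorem isDyck {M : List Bool} (h : SimpleJasso M) : IsDyck M := by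
  refine ⟨h.2.1, fun t ht => ?_⟩
  by_cases h0 : t = []
  · simp [h0]
  by_cases hM : t = M
  · rw [hM, h.2.1]
  exact (h.2.2 t ht h0 hM).le

theorem eq_of_prefix {w v : List Bool} (hw : SimpleJasso w) (hv : SimpleJasso v) (h : w <+: v) :
    w = v := by
  by_contra hne
  have := hv.2.2 w h hw.1 hne
  have := hw.2.1
  omega

theorem eq_of_append_eq {w v x y : List Bool} (hw : SimpleJasso w) (hv : SimpleJasso v)
    (h : w ++ x = v ++ y) : w = v := by
  rcases List.prefix_or_prefix_of_prefix (List.prefix_append w x) (h ▸ List.prefix_append v y)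
    with h' | h'
  · exact hw.eq_of_prefix hv h'
  · exact (hv.eq_of_prefix hw h').symm

end SimpleJasso

theorem flatten_inj_of_simpleJasso {L L' : List (List Bool)} (hL : ∀ w ∈ L, SimpleJasso w)
    (hL' : ∀ w ∈ L', SimpleJasso w) (h : L.flatten = L'.flatten) : L = L' := by
  induction L generalizing L' with
  | nil =>
    cases L' with
    | nil => rfl
    | cons v L' => simp [(hL' v List.mem_cons_self).1] at h
  | cons w L ih =>
    cases L' with
    | nil => simp [(hL w List.mem_cons_self).1] at h
    | cons v L' =>
      rw [List.forall_mem_cons] at hL hL'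
      rw [List.flatten_cons, List.flatten_cons] at h
      obtain rfl := hL.1.eq_of_append_eq hL'.1 h
      rw [ih hL.2 hL'.2 (List.append_cancel_left h)]

theorem not_transGen_self_of_lt {α β : Type*} [Preorder β] {R : α → α → Prop} (f : α → β)
    (hf : ∀ x y, R x y → f x < f y) (x : α) : ¬ Relation.TransGen R x x := fun h => by
  have : Relation.TransGen (· < ·) (f x) (f x) := Relation.TransGen.lift f hf x x h
  rw [Relation.transGen_eq_self] at this
  exact lt_irrefl _ this

namespace Dallajascar

variable {S T : Type*} [Fintype S] [Nonempty S] [Fintype T] [Nonempty T]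

theorem phi_eq_none_iff (D : Dallajascar S) {x : S} : D.phi x = none ↔ x = D.r :=
  ⟨fun h => by_contra fun hx => D.phi_ne_none x hx h, fun h => h ▸ D.phi_root⟩

theorem wfP_swap (D : Dallajascar S) : WellFounded (Function.swap D.P) := by
  have : IsTrans S (Relation.TransGen (Function.swap D.P)) :=
    ⟨fun _ _ _ => Relation.TransGen.trans⟩
  have : Std.Irrefl (Relation.TransGen (Function.swap D.P)) :=
    ⟨fun x h => D.acyclic x (Relation.transGen_swap.1 h)⟩
  exact Subrelation.wf Relation.TransGen.single (Finite.wellFounded_of_trans_of_irrefl _)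

theorem W_eq (D : Dallajascar S) (x : S) :
    D.W x = true :: (((D.H x).map D.W).flatten ++ [false]) := by
  rw [W, WellFounded.fix_eq, List.attach_map_val]

theorem simpleJasso_W (D : Dallajascar S) (x : S) : SimpleJasso (D.W x) := by
  induction x using D.wfP.induction with
  | _ x ih =>
  refine simpleJasso_iff.2 ⟨_, IsDyck.flatten fun w hw => ?_, D.W_eq x⟩
  obtain ⟨y, hy, rfl⟩ := List.mem_map.1 hw
  exact (ih y ((D.mem_H x y).1 hy)).isDyck

theorem length_W_lt (D : Dallajascar S) {x y : S} (h : D.phi x = some y) :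
    (D.W x).length < (D.W y).length := by
  have hx : D.W x ∈ (D.H y).map D.W := List.mem_map_of_mem ((D.mem_H y x).2 h)
  have := (List.sublist_flatten_of_mem hx).length_le
  rw [W_eq D y]
  simp only [List.length_cons, List.length_append]
  omega

theorem W_apply_of_H_map (D : Dallajascar S) (E : Dallajascar T) (f : S → T)
    (hf : ∀ x, E.H (f x) = (D.H x).map f) (x : S) : E.W (f x) = D.W x := by
  induction x using D.wfP.induction with
  | _ x ih =>
  rw [W_eq, W_eq, hf, List.map_map]
  congr 3
  exact List.map_congr_left fun y hy => ih y ((D.mem_H x y).1 hy)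

theorem apply_root_of_H_map (D : Dallajascar S) (E : Dallajascar T) (f : S ≃ T)
    (hf : ∀ x, E.H (f x) = (D.H x).map f) : f D.r = E.r := by
  refine E.phi_eq_none_iff.1 (Option.eq_none_iff_forall_ne_some.2 fun w hw => ?_)
  obtain ⟨v, rfl⟩ := f.surjective w
  have := (E.mem_H _ _).2 hw
  rw [hf, List.mem_map_of_injective f.injective, D.mem_H, D.phi_root] at this
  cases this

theorem MJword_eq_of_H_map (D : Dallajascar S) (E : Dallajascar T) (f : S ≃ T)
    (hf : ∀ x, E.H (f x) = (D.H x).map f) : E.MJword = D.MJword := by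
  rw [MJword, MJword, ← apply_root_of_H_map D E f hf, W_apply_of_H_map D E f hf]

theorem map_W_H_eq_of_W_eq {D : Dallajascar S} {E : Dallajascar T} {x : S} {y : T}
    (h : E.W y = D.W x) : (E.H y).map E.W = (D.H x).map D.W := by
  rw [W_eq, W_eq, List.cons.injEq, List.append_cancel_right_eq] at h
  refine flatten_inj_of_simpleJasso ?_ ?_ h.2
  all_goals
    intro w hw
    obtain ⟨z, -, rfl⟩ := List.mem_map.1 hw
    exact simpleJasso_W _ z

theorem eq_id_of_H_map (D : Dallajascar S) (g : S → S) (hr : g D.r = D.r)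
    (hg : ∀ x, D.H (g x) = (D.H x).map g) : g = id := by
  funext x
  induction x using D.wfP_swap.induction with
  | _ x ih =>
  cases hx : D.phi x with
  | none => rw [D.phi_eq_none_iff.1 hx]; exact hr
  | some p =>
    have hfix : (D.H p).map g = (D.H p).map id := by rw [List.map_id, ← hg p, ih p hx]; rfl
    exact List.map_eq_map_iff.1 hfix x ((D.mem_H p x).2 hx)

section Corr

open scoped Classical

noncomputable def corr (D : Dallajascar S) (E : Dallajascar T) : S → T :=
  D.wfP_swap.fix fun x ih =>
    match hx : D.phi x with
    | none => E.r
    | some p => (E.H (ih p hx)).getD ((D.H p).idxOf x) E.r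

theorem corr_of_phi_eq_none (D : Dallajascar S) (E : Dallajascar T) {x : S}
    (hx : D.phi x = none) : corr D E x = E.r := by
  rw [corr, WellFounded.fix_eq]
  split
  · rfl
  · simp_all

theorem corr_of_phi_eq_some (D : Dallajascar S) (E : Dallajascar T) {x p : S}
    (hx : D.phi x = some p) :
    corr D E x = (E.H (corr D E p)).getD ((D.H p).idxOf x) E.r := by
  rw [corr, WellFounded.fix_eq]
  split
  · simp_all
  · next p' hp =>
    obtain rfl : p' = p := Option.some_injective _ (hp.symm.trans hx)
    rfl

variable {D : Dallajascar S} {E : Dallajascar T}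

theorem W_corr (h : D.MJword = E.MJword) (x : S) : E.W (corr D E x) = D.W x := by
  induction x using D.wfP_swap.induction with
  | _ x ih =>
  cases hx : D.phi x with
  | none => rw [corr_of_phi_eq_none D E hx, D.phi_eq_none_iff.1 hx]; exact h.symm
  | some p =>
    have hmap := map_W_H_eq_of_W_eq (ih p hx)
    have hi : (D.H p).idxOf x < (D.H p).length := List.idxOf_lt_length_iff.2 ((D.mem_H p x).2 hx)
    have hlen : (E.H (corr D E p)).length = (D.H p).length := by
      simpa using congrArg List.length hmap
    rw [corr_of_phi_eq_some D E hx, List.getD_eq_getElem _ _ (hlen ▸ hi)]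
    have := List.getElem_of_eq hmap (by simpa [hlen] using hi)
    rwa [List.getElem_map, List.getElem_map, List.getElem_idxOf] at this

theorem H_corr (h : D.MJword = E.MJword) (p : S) :
    E.H (corr D E p) = (D.H p).map (corr D E) := by
  have hlen : (E.H (corr D E p)).length = (D.H p).length := by
    simpa using congrArg List.length (map_W_H_eq_of_W_eq (W_corr h p))
  refine List.ext_getElem (by simpa using hlen) fun i h1 h2 => ?_
  have hc : D.phi (D.H p)[i] = some p := (D.mem_H p _).1 (List.getElem_mem _)
  rw [List.getElem_map, corr_of_phi_eq_some D E hc, (D.H_nodup p).idxOf_getElem,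
    List.getD_eq_getElem]

theorem corr_comp_corr (h : D.MJword = E.MJword) : corr E D ∘ corr D E = id :=
  D.eq_id_of_H_map _ (by simp [corr_of_phi_eq_none, phi_root])
    fun x => by simp [H_corr h, H_corr h.symm, List.map_map]

theorem exists_equiv_of_MJword_eq (h : D.MJword = E.MJword) :
    ∃ f : S ≃ T, ∀ x, E.H (f x) = (D.H x).map f :=
  ⟨⟨corr D E, corr E D, congrFun (corr_comp_corr h), congrFun (corr_comp_corr h.symm)⟩, H_corr h⟩

end Corr

section Graft

variable {k : ℕ} {V : Fin k → Type*} [∀ i, Fintype (V i)] [∀ i, Nonempty (V i)]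

def graft (D : ∀ i, Dallajascar (V i)) : Dallajascar (Option (Σ i, V i)) where
  phi
    | none => none
    | some ⟨i, x⟩ => some (((D i).phi x).map fun y => ⟨i, y⟩)
  H
    | none => List.ofFn fun i => some ⟨i, (D i).r⟩
    | some ⟨i, x⟩ => ((D i).H x).map fun y => some ⟨i, y⟩
  r := none
  phi_root := rfl
  phi_ne_none
    | none, h => absurd rfl h
    | some _, _ => Option.some_ne_none _
  acyclic := by
    refine not_transGen_self_of_lt
      (fun x => x.elim (⊤ : WithTop ℕ) fun y => ((D y.1).W y.2).length) ?_
    rintro (_ | ⟨i, x⟩) (_ | ⟨j, y⟩) h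
    · cases h
    · cases h
    · exact WithTop.coe_lt_top _
    · obtain ⟨z, hz, ⟨⟩⟩ := Option.map_eq_some_iff.1 (Option.some_injective _ h)
      exact WithTop.coe_lt_coe.2 ((D i).length_W_lt hz)
  H_nodup
    | none => List.nodup_ofFn.2 fun _ _ h => (Sigma.mk.inj (Option.some_injective _ h)).1
    | some ⟨i, x⟩ => ((D i).H_nodup x).map (Option.some_injective _ |>.comp sigma_mk_injective)
  mem_H := by
    rintro (_ | ⟨i, x⟩) (_ | ⟨j, y⟩)
    · simp
    · simp only [List.mem_ofFn, Option.some.injEq, Sigma.mk.inj_iff, Option.map_eq_none_iff,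
        phi_eq_none_iff]
      exact ⟨fun ⟨_, rfl, h⟩ => (eq_of_heq h).symm, fun h => ⟨j, rfl, h ▸ HEq.rfl⟩⟩
    · simp
    · simp only [List.mem_map, Option.some.injEq, Option.map_eq_some_iff,
        Sigma.mk.inj_iff]
      constructor
      · rintro ⟨z, hz, rfl, h⟩
        cases eq_of_heq h
        exact ⟨x, ((D i).mem_H x z).1 hz, rfl, HEq.rfl⟩
      · rintro ⟨z, hz, rfl, h⟩
        cases eq_of_heq h
        exact ⟨y, ((D j).mem_H z y).2 hz, rfl, HEq.rfl⟩

theorem MJword_graft (D : ∀ i, Dallajascar (V i)) :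
    (graft D).MJword = true :: ((List.ofFn fun i => (D i).MJword).flatten ++ [false]) := by
  have hW (i : Fin k) : (graft D).W (some ⟨i, (D i).r⟩) = (D i).MJword :=
    W_apply_of_H_map (D i) (graft D) (fun x => some ⟨i, x⟩) (fun _ => rfl) _
  have hH : (graft D).H (graft D).r = List.ofFn fun i => some ⟨i, (D i).r⟩ := rfl
  rw [MJword, W_eq, hH, List.map_ofFn]
  simp only [Function.comp_def, hW]

end Graft

def transport (D : Dallajascar S) (e : S ≃ T) : Dallajascar T where
  phi y := (D.phi (e.symm y)).map e
  H y := (D.H (e.symm y)).map e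
  r := e D.r
  phi_root := by simp [D.phi_root]
  phi_ne_none y hy := by simpa [phi_eq_none_iff, e.symm_apply_eq] using hy
  acyclic := not_transGen_self_of_lt (fun y => (D.W (e.symm y)).length) fun y z h => by
    obtain ⟨w, hw, rfl⟩ := Option.map_eq_some_iff.1 h
    exact D.length_W_lt (by simpa using hw)
  H_nodup y := (D.H_nodup _).map e.injective
  mem_H x y := by
    rw [← e.apply_symm_apply y, List.mem_map_of_injective e.injective, D.mem_H]
    simp [← Equiv.eq_symm_apply]

theorem exists_fin_MJword_eq (D : Dallajascar S) :
    ∃ (n : ℕ) (E : Dallajascar (Fin (n + 1))), E.MJword = D.MJword := by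
  obtain ⟨n, hn⟩ := Nat.exists_eq_add_one_of_ne_zero (Fintype.card_ne_zero (α := S))
  let e := (Fintype.equivFin S).trans (finCongr hn)
  exact ⟨n, D.transport e, MJword_eq_of_H_map D _ e fun x => by simp [transport]⟩

end Dallajascar

theorem exists_MJsig_eq_of_simpleJasso {M : List Bool} (hM : SimpleJasso M) :
    ∃ a : Σ n : ℕ, Dallajascar (Fin (n + 1)), MJsig a = M := by
  obtain ⟨I, hI, rfl⟩ := simpleJasso_iff.1 hM
  obtain ⟨L, hL, rfl⟩ := hI.exists_flatten_eq
  have (i : Fin L.length) : ∃ a : Σ n : ℕ, Dallajascar (Fin (n + 1)), MJsig a = L[(i : ℕ)] := by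
    -- the termination measure for the recursive call
    have : L[(i : ℕ)].length < (true :: (L.flatten ++ [false])).length := by
      have := (List.sublist_flatten_of_mem (List.getElem_mem i.2)).length_le
      simp only [List.length_cons, List.length_append]
      omega
    exact exists_MJsig_eq_of_simpleJasso (hL _ (List.getElem_mem _))
  choose a ha using this
  obtain ⟨n, E, hE⟩ := (Dallajascar.graft fun i => (a i).2).exists_fin_MJword_eq
  refine ⟨⟨n, E⟩, ?_⟩
  simp only [MJsig] at ha ⊢
  rw [hE, Dallajascar.MJword_graft]
  simp only [ha, List.ofFn_getElem]
termination_by M.length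

theorem equivD_equivalence : Equivalence EquivD where
  refl a := ⟨Equiv.refl _, fun x => by simp⟩
  symm := by
    rintro a b ⟨f, hf⟩
    refine ⟨f.symm, fun y => ?_⟩
    rw [← f.apply_symm_apply y, hf, List.map_map, f.symm_comp_self, List.map_id,
      f.symm_apply_apply]
  trans := by
    rintro a b c ⟨f, hf⟩ ⟨g, hg⟩
    exact ⟨f.trans g, fun x => by simp [hg, hf, List.map_map, Function.comp_def]⟩

/-- Corollaire fondamental 3.3.6: `EquivD` is an equivalence relation, the Jassological
word is constant on equivalence classes, and the induced map on the quotient is a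
bijection onto the set of Simple Jassological words. -/
theorem mjword_bijection :
    Equivalence EquivD ∧
    ∃ h : ∀ a b, EquivD a b → MJsig a = MJsig b,
      Function.Injective (Quot.lift MJsig h) ∧
      Set.range (Quot.lift MJsig h) = {M : List Bool | SimpleJasso M} := by
  refine ⟨equivD_equivalence, fun a b ⟨f, hf⟩ => (a.2.MJword_eq_of_H_map b.2 f hf).symm, ?_, ?_⟩
  · rintro ⟨a⟩ ⟨b⟩ h
    exact Quot.sound (Dallajascar.exists_equiv_of_MJword_eq h)
  · ext M
    refine ⟨?_, fun hM => ?_⟩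
    · rintro ⟨⟨a⟩, rfl⟩
      exact a.2.simpleJasso_W a.2.r
    · obtain ⟨a, rfl⟩ := exists_MJsig_eq_of_simpleJasso hM
      exact ⟨Quot.mk _ a, rfl⟩
end
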